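/- arXiv:math/0602616 — 3 statements merged into one kernel-verified Lean document; each statement's English description precedes it below -/
import Mathlib

section
/- Let (L_•, d_•) be a free resolution of the A-module M with augmentation ρ : L₀ → M, and let τ : M → L₀ be a k-linear section of ρ. Let φ : L₁ → M' be A-linear with φ ∘ d₁ = 0 (a 1-cocycle). For a ∈ A and m ∈ M, choose x ∈ L₁ with d₀(x) = a τ(m) − τ(a m) (possible since ρ(a τ(m) − τ(a m)) = 0 and L_• is exact). Then ψ(a)(m) := φ(x) is independent of the choice of x, ψ(a) : M → M' is k-linear, and ψ : A → Hom_k(M, M') is a k-linear derivation with respect to the A-A-bimodule structure on Hom_k(M, M'). -/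
/-!
`ψ(a)(m)` is `φ` applied to a `d₀`-preimage of the linearity defect `δ(a, m) = a τ(m) − τ(a m)`
of the section `τ`, which lies in `ker ρ = im d₀`. Since `φ` kills `ker d₀ = im d₁`, it descends
to an `A`-linear map `φ̄ : im d₀ → M'`, and `ψ = φ̄ ∘ δ`. So `ψ` inherits `k`-bilinearity from `δ`,
and the Leibniz rule for `ψ` comes from `δ(a b, m) = a δ(b, m) + δ(a, b m)` and the `A`-linearity
of `φ̄`.
-/

namespace LinearMap

section FactorThroughRange

variable {A L₀ L₁ M' : Type*} [Ring A] [AddCommGroup L₀] [Module A L₀]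
  [AddCommGroup L₁] [Module A L₁] [AddCommGroup M'] [Module A M']

noncomputable def factorThroughRange (d : L₁ →ₗ[A] L₀) (φ : L₁ →ₗ[A] M') (h : ker d ≤ ker φ) :
    range d →ₗ[A] M' :=
  (ker d).liftQ φ h ∘ₗ d.quotKerEquivRange.symm.toLinearMap

theorem factorThroughRange_apply {d : L₁ →ₗ[A] L₀} {φ : L₁ →ₗ[A] M'} (h : ker d ≤ ker φ)
    {y : L₀} (hy : y ∈ range d) {x : L₁} (hx : d x = y) :
    factorThroughRange d φ h ⟨y, hy⟩ = φ x := by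
  subst hx
  simp [factorThroughRange]

end FactorThroughRange

section LinearityDefect

variable {k A M L₀ : Type*} [CommSemiring k] [Semiring A] [Algebra k A]
  [AddCommMonoid M] [Module k M] [Module A M] [IsScalarTower k A M]
  [AddCommGroup L₀] [Module k L₀] [Module A L₀] [IsScalarTower k A L₀]

variable (A) in
def linearityDefect (τ : M →ₗ[k] L₀) : A →ₗ[k] M →ₗ[k] L₀ :=
  mk₂ k (fun a m => a • τ m - τ (a • m))
    (fun a b m => by simp only [add_smul, map_add]; abel)
    (fun c a m => by simp only [smul_assoc, map_smul, smul_sub])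
    (fun a m n => by simp only [smul_add, map_add]; abel)
    (fun c a m => by simp only [map_smul, smul_comm a c, smul_sub])

theorem linearityDefect_apply (τ : M →ₗ[k] L₀) (a : A) (m : M) :
    linearityDefect A τ a m = a • τ m - τ (a • m) := rfl

theorem linearityDefect_mul (τ : M →ₗ[k] L₀) (a b : A) (m : M) :
    linearityDefect A τ (a * b) m =
      a • linearityDefect A τ b m + linearityDefect A τ a (b • m) := by
  simp only [linearityDefect_apply, mul_smul, smul_sub]
  abel

end LinearityDefect

section CocycleDerivation

variable {k A M M' L₀ L₁ : Type*} [CommSemiring k] [Ring A] [Algebra k A]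
  [AddCommGroup M] [Module k M] [Module A M] [IsScalarTower k A M]
  [AddCommGroup M'] [Module k M'] [Module A M'] [IsScalarTower k A M']
  [AddCommGroup L₀] [Module k L₀] [Module A L₀] [IsScalarTower k A L₀]
  [AddCommGroup L₁] [Module A L₁]
  {d₀ : L₁ →ₗ[A] L₀} {φ : L₁ →ₗ[A] M'} {τ : M →ₗ[k] L₀}

theorem linearityDefect_mem_ker {ρ : L₀ →ₗ[A] M} (hτ : ∀ m, ρ (τ m) = m) (a : A) (m : M) :
    linearityDefect A τ a m ∈ ker ρ := by
  rw [mem_ker, linearityDefect_apply, map_sub, map_smul, hτ, hτ, sub_self]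

noncomputable def cocycleDerivation (hker : ker d₀ ≤ ker φ)
    (hdefect : ∀ a m, linearityDefect A τ a m ∈ range d₀) : A →ₗ[k] M →ₗ[k] M' :=
  (codRestrict₂ (linearityDefect A τ) ((range d₀).restrictScalars k).subtype
    Subtype.val_injective (by simpa using hdefect)).compr₂
    ((factorThroughRange d₀ φ hker).restrictScalars k)

variable {hker : ker d₀ ≤ ker φ} {hdefect : ∀ a m, linearityDefect A τ a m ∈ range d₀}

theorem cocycleDerivation_apply {a : A} {m : M} {x : L₁}
    (hx : d₀ x = linearityDefect A τ a m) : cocycleDerivation hker hdefect a m = φ x :=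
  factorThroughRange_apply hker _ <| hx.trans <| .symm <|
    codRestrict₂_apply (linearityDefect A τ) ((range d₀).restrictScalars k).subtype
      Subtype.val_injective _ a m

theorem cocycleDerivation_mul (a b : A) (m : M) :
    cocycleDerivation hker hdefect (a * b) m =
      a • cocycleDerivation hker hdefect b m + cocycleDerivation hker hdefect a (b • m) := by
  obtain ⟨x, hx⟩ := hdefect b m
  obtain ⟨x', hx'⟩ := hdefect a (b • m)
  have hsum : d₀ (a • x + x') = linearityDefect A τ (a * b) m := by
    rw [map_add, map_smul, hx, hx', linearityDefect_mul]
  rw [cocycleDerivation_apply hsum, cocycleDerivation_apply hx, cocycleDerivation_apply hx',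
    map_add, map_smul]

end CocycleDerivation

end LinearMap

theorem stmt15_general {k A M M' L₀ L₁ L₂ : Type*} [Field k] [CommRing A] [Algebra k A]
    [AddCommGroup M] [Module k M] [Module A M] [IsScalarTower k A M]
    [AddCommGroup M'] [Module k M'] [Module A M'] [IsScalarTower k A M']
    [AddCommGroup L₀] [Module A L₀] [Module k L₀] [IsScalarTower k A L₀]
    [AddCommGroup L₁] [Module A L₁]
    [AddCommGroup L₂] [Module A L₂]
    (ρ : L₀ →ₗ[A] M) (d₀ : L₁ →ₗ[A] L₀) (d₁ : L₂ →ₗ[A] L₁)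
    (hex₀ : LinearMap.range d₀ = LinearMap.ker ρ)
    (hex₁ : LinearMap.range d₁ = LinearMap.ker d₀)
    (τ : M →ₗ[k] L₀) (hτ : ∀ m : M, ρ (τ m) = m)
    (φ : L₁ →ₗ[A] M') (hφ : ∀ y : L₂, φ (d₁ y) = 0) :
    -- well-definedness: `φ(x)` does not depend on the choice of `x`
    (∀ (a : A) (m : M) (x x' : L₁),
      d₀ x = a • τ m - τ (a • m) → d₀ x' = a • τ m - τ (a • m) → φ x = φ x') ∧
    -- `ψ(a)` is `k`-linear in `m`, and `ψ` is a derivation `A → Hom_k(M, M')`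
    (∃ ψ : A → M →ₗ[k] M',
      (∀ (a : A) (m : M) (x : L₁),
        d₀ x = a • τ m - τ (a • m) → ψ a m = φ x) ∧
      (∀ (c : k) (a b : A), ψ (c • a + b) = c • ψ a + ψ b) ∧
      (∀ (a b : A) (m : M), ψ (a * b) m = a • ψ b m + ψ a (b • m))) := by
  have hker : LinearMap.ker d₀ ≤ LinearMap.ker φ :=
    hex₁ ▸ LinearMap.range_le_ker_iff.2 (LinearMap.ext hφ)
  have hdefect : ∀ a m, LinearMap.linearityDefect A τ a m ∈ LinearMap.range d₀ :=
    hex₀ ▸ LinearMap.linearityDefect_mem_ker hτ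
  refine ⟨fun a m x x' hx hx' => ?_, LinearMap.cocycleDerivation hker hdefect,
    fun a m x hx => LinearMap.cocycleDerivation_apply hx,
    fun c a b => by rw [map_add, map_smul], LinearMap.cocycleDerivation_mul⟩
  exact (LinearMap.cocycleDerivation_apply (hker := hker) (hdefect := hdefect) hx).symm.trans
    (LinearMap.cocycleDerivation_apply hx')

/-- given a free resolution `⋯ → L₂ → L₁ → L₀ → M → 0`, a `k`-linear section
`τ` of the augmentation `ρ`, and a 1-cocycle `φ : L₁ → M'`, the formula `ψ(a)(m) = φ(x)`,
where `d₀ x = a τ(m) − τ(a m)`, is independent of the choice of `x` and defines a `k`-linear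
derivation `ψ : A → Hom_k(M, M')`. -/
theorem stmt15 {k A M M' L₀ L₁ L₂ : Type*} [Field k] [CommRing A] [Algebra k A]
    [AddCommGroup M] [Module k M] [Module A M] [IsScalarTower k A M]
    [AddCommGroup M'] [Module k M'] [Module A M'] [IsScalarTower k A M']
    [AddCommGroup L₀] [Module A L₀] [Module k L₀] [IsScalarTower k A L₀] [Module.Free A L₀]
    [AddCommGroup L₁] [Module A L₁] [Module k L₁] [IsScalarTower k A L₁] [Module.Free A L₁]
    [AddCommGroup L₂] [Module A L₂] [Module k L₂] [IsScalarTower k A L₂] [Module.Free A L₂]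
    (ρ : L₀ →ₗ[A] M) (d₀ : L₁ →ₗ[A] L₀) (d₁ : L₂ →ₗ[A] L₁)
    (hρ : Function.Surjective ρ)
    (hex₀ : LinearMap.range d₀ = LinearMap.ker ρ)
    (hex₁ : LinearMap.range d₁ = LinearMap.ker d₀)
    (τ : M →ₗ[k] L₀) (hτ : ∀ m : M, ρ (τ m) = m)
    (φ : L₁ →ₗ[A] M') (hφ : ∀ y : L₂, φ (d₁ y) = 0) :
    -- well-definedness: `φ(x)` does not depend on the choice of `x`
    (∀ (a : A) (m : M) (x x' : L₁),
      d₀ x = a • τ m - τ (a • m) → d₀ x' = a • τ m - τ (a • m) → φ x = φ x') ∧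
    -- `ψ(a)` is `k`-linear in `m`, and `ψ` is a derivation `A → Hom_k(M, M')`
    (∃ ψ : A → M →ₗ[k] M',
      (∀ (a : A) (m : M) (x : L₁),
        d₀ x = a • τ m - τ (a • m) → ψ a m = φ x) ∧
      (∀ (c : k) (a b : A), ψ (c • a + b) = c • ψ a + ψ b) ∧
      (∀ (a b : A) (m : M), ψ (a * b) m = a • ψ b m + ψ a (b • m))) :=
  stmt15_general ρ d₀ d₁ hex₀ hex₁ τ hτ φ hφ
end

section
/- With notation as above, if the 1-cocycle φ : L₁ → M' is a coboundary, i.e. φ = φ' ∘ d₀ for some A-linear φ' : L₀ → M', then the associated derivation ψ : A → Hom_k(M, M') is trivial: ψ(a) = a ψ₀ − ψ₀ a where ψ₀ = φ' ∘ τ ∈ Hom_k(M, M'). Conversely, if ψ is a trivial derivation then φ is a coboundary. Hence the assignment φ ↦ [ψ] induces an injective k-linear map Ext¹_A(M, M') → HH¹(A, Hom_k(M, M')). -/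
/-!
Exactness lets `φ` descend to an `A`-linear map `f` on `ker ρ = im d₀`, and then
`ψ a m = f (a • τ m - τ (a • m))`. An `A`-linear extension `g` of `f` to `L₀` gives `ψ₀ = g ∘ τ`.
Conversely, `x ↦ f (x - τ (ρ x)) + ψ₀ (ρ x)` extends `f`, and it is `A`-linear because the
failure of `x ↦ x - τ (ρ x)` to commute with `a` is the defect `a • τ (ρ x) - τ (a • ρ x)`,
whose image under `f` is exactly cancelled by the inner derivation of `ψ₀`.
-/

open LinearMap

section RangeLift

variable {A L₀ L₁ M' : Type*} [Ring A] [AddCommGroup L₀] [Module A L₀] [AddCommGroup L₁]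
  [Module A L₁] [AddCommGroup M'] [Module A M']

noncomputable def liftOfRangeEq (d : L₁ →ₗ[A] L₀) {K : Submodule A L₀} (hK : range d = K)
    (φ : L₁ →ₗ[A] M') (hφ : ker d ≤ ker φ) : K →ₗ[A] M' :=
  (ker d).liftQ φ hφ ∘ₗ d.quotKerEquivRange.symm.toLinearMap ∘ₗ
    (LinearEquiv.ofEq _ _ hK.symm).toLinearMap

theorem liftOfRangeEq_apply (d : L₁ →ₗ[A] L₀) {K : Submodule A L₀} (hK : range d = K)
    (φ : L₁ →ₗ[A] M') (hφ : ker d ≤ ker φ) {x : L₁} {y : K} (hxy : d x = y) :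
    liftOfRangeEq d hK φ hφ y = φ x := by
  obtain ⟨y, hy⟩ := y
  subst hxy
  change (ker d).liftQ φ hφ (d.quotKerEquivRange.symm ⟨d x, mem_range_self d x⟩) = φ x
  rw [quotKerEquivRange_symm_apply_image]
  rfl

end RangeLift

section SectionDefect

variable {k A M M' L : Type*} [CommSemiring k] [Ring A]
  [AddCommGroup M] [Module k M] [Module A M] [AddCommGroup M'] [Module k M'] [Module A M']
  [AddCommGroup L] [Module k L] [Module A L]
  (ρ : L →ₗ[A] M) (τ : M →ₗ[k] L) (hτ : ∀ m, ρ (τ m) = m)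

variable (k) in
def IsInnerDerivation (D : A → M → M') : Prop :=
  ∃ ψ₀ : M →ₗ[k] M', ∀ a m, D a m = a • ψ₀ m - ψ₀ (a • m)

def sectionDefect (a : A) (m : M) : ker ρ :=
  ⟨a • τ m - τ (a • m), by simp [hτ]⟩

def kerRetraction : L →+ ker ρ where
  toFun x := ⟨x - τ (ρ x), by simp [hτ]⟩
  map_zero' := by ext; simp
  map_add' x y := by ext; simp only [map_add, Submodule.coe_add]; abel

theorem kerRetraction_of_mem (x : ker ρ) : kerRetraction ρ τ hτ x = x := by
  ext; simp [kerRetraction, mem_ker.1 x.2]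

theorem kerRetraction_smul (a : A) (x : L) :
    kerRetraction ρ τ hτ (a • x) = a • kerRetraction ρ τ hτ x + sectionDefect ρ τ hτ a (ρ x) := by
  ext
  simp only [kerRetraction, sectionDefect, AddMonoidHom.coe_mk, ZeroHom.coe_mk, map_smul,
    Submodule.coe_add, Submodule.coe_smul, smul_sub]
  abel

variable [Algebra k A] [IsScalarTower k A M'] [IsScalarTower k A L]

theorem exists_extension_iff_isInnerDerivation (f : ker ρ →ₗ[A] M') :
    (∃ g : L →ₗ[A] M', ∀ x : ker ρ, g x = f x) ↔
      IsInnerDerivation k fun a m ↦ f (sectionDefect ρ τ hτ a m) := by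
  constructor
  · rintro ⟨g, hg⟩
    refine ⟨(g.restrictScalars k).comp τ, fun a m ↦ ?_⟩
    simp [← hg, sectionDefect]
  · rintro ⟨ψ₀, hψ₀⟩
    let g : L →ₗ[A] M' :=
      { toFun x := f (kerRetraction ρ τ hτ x) + ψ₀ (ρ x)
        map_add' x y := by simp only [map_add]; abel
        map_smul' a x := by
          simp only [kerRetraction_smul, map_add, map_smul, hψ₀, RingHom.id_apply, smul_add]
          abel }
    refine ⟨g, fun x ↦ ?_⟩
    simp [g, kerRetraction_of_mem, mem_ker.1 x.2]

end SectionDefect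

theorem stmt16_general {k A M M' L₀ L₁ L₂ : Type*} [Field k] [CommRing A] [Algebra k A]
    [AddCommGroup M] [Module k M] [Module A M]
    [AddCommGroup M'] [Module k M'] [Module A M'] [IsScalarTower k A M']
    [AddCommGroup L₀] [Module A L₀] [Module k L₀] [IsScalarTower k A L₀]
    [AddCommGroup L₁] [Module A L₁]
    [AddCommGroup L₂] [Module A L₂]
    (ρ : L₀ →ₗ[A] M) (d₀ : L₁ →ₗ[A] L₀) (d₁ : L₂ →ₗ[A] L₁)
    (hex₀ : LinearMap.range d₀ = LinearMap.ker ρ)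
    (hex₁ : LinearMap.range d₁ = LinearMap.ker d₀)
    (τ : M →ₗ[k] L₀) (hτ : ∀ m : M, ρ (τ m) = m)
    (φ : L₁ →ₗ[A] M') (hφ : ∀ y : L₂, φ (d₁ y) = 0)
    (ψ : A → M →ₗ[k] M')
    (hψ : ∀ (a : A) (m : M) (x : L₁),
      d₀ x = a • τ m - τ (a • m) → ψ a m = φ x) :
    -- `φ` is a coboundary iff `ψ` is a trivial derivation
    (∃ φ' : L₀ →ₗ[A] M', ∀ x : L₁, φ x = φ' (d₀ x)) ↔
    (∃ ψ₀ : M →ₗ[k] M', ∀ (a : A) (m : M), ψ a m = a • ψ₀ m - ψ₀ (a • m)) := by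
  have hker : ker d₀ ≤ ker φ := hex₁ ▸ range_le_ker_iff.2 (LinearMap.ext hφ)
  set f := liftOfRangeEq d₀ hex₀ φ hker
  have hd₀ : ∀ y : ker ρ, ∃ x, d₀ x = y := fun y ↦ mem_range.1 (hex₀.ge y.2)
  have hψf : ∀ a m, ψ a m = f (sectionDefect ρ τ hτ a m) := fun a m ↦ by
    obtain ⟨x, hx⟩ := hd₀ (sectionDefect ρ τ hτ a m)
    rw [hψ a m x hx, liftOfRangeEq_apply d₀ hex₀ φ hker hx]
  have hcoboundary : ∀ φ' : L₀ →ₗ[A] M',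
      (∀ x, φ x = φ' (d₀ x)) ↔ ∀ y : ker ρ, φ' y = f y := fun φ' ↦ by
    refine ⟨fun h y ↦ ?_, fun h x ↦ ?_⟩
    · obtain ⟨x, hx⟩ := hd₀ y
      rw [liftOfRangeEq_apply d₀ hex₀ φ hker hx, ← hx, h]
    · have hx : d₀ x ∈ ker ρ := hex₀.le (mem_range_self d₀ x)
      rw [← liftOfRangeEq_apply d₀ hex₀ φ hker (y := ⟨d₀ x, hx⟩) rfl, ← h]
  simp_rw [hcoboundary, exists_extension_iff_isInnerDerivation ρ τ hτ, hψf]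
  rfl

/-- with notation as in the construction of `ψ` from a 1-cocycle
`φ : L₁ → M'`, the cocycle `φ` is a coboundary (i.e. `φ = φ' ∘ d₀` for some `A`-linear
`φ' : L₀ → M'`) if and only if the associated derivation `ψ` is trivial (inner); hence
`φ ↦ [ψ]` induces an injective `k`-linear map `Ext¹_A(M, M') → HH¹(A, Hom_k(M, M'))`. -/
theorem stmt16 {k A M M' L₀ L₁ L₂ : Type*} [Field k] [CommRing A] [Algebra k A]
    [AddCommGroup M] [Module k M] [Module A M] [IsScalarTower k A M]
    [AddCommGroup M'] [Module k M'] [Module A M'] [IsScalarTower k A M']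
    [AddCommGroup L₀] [Module A L₀] [Module k L₀] [IsScalarTower k A L₀] [Module.Free A L₀]
    [AddCommGroup L₁] [Module A L₁] [Module k L₁] [IsScalarTower k A L₁] [Module.Free A L₁]
    [AddCommGroup L₂] [Module A L₂] [Module k L₂] [IsScalarTower k A L₂] [Module.Free A L₂]
    (ρ : L₀ →ₗ[A] M) (d₀ : L₁ →ₗ[A] L₀) (d₁ : L₂ →ₗ[A] L₁)
    (hρ : Function.Surjective ρ)
    (hex₀ : LinearMap.range d₀ = LinearMap.ker ρ)
    (hex₁ : LinearMap.range d₁ = LinearMap.ker d₀)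
    (τ : M →ₗ[k] L₀) (hτ : ∀ m : M, ρ (τ m) = m)
    (φ : L₁ →ₗ[A] M') (hφ : ∀ y : L₂, φ (d₁ y) = 0)
    (ψ : A → M →ₗ[k] M')
    (hψ : ∀ (a : A) (m : M) (x : L₁),
      d₀ x = a • τ m - τ (a • m) → ψ a m = φ x) :
    -- `φ` is a coboundary iff `ψ` is a trivial derivation
    (∃ φ' : L₀ →ₗ[A] M', ∀ x : L₁, φ x = φ' (d₀ x)) ↔
    (∃ ψ₀ : M →ₗ[k] M', ∀ (a : A) (m : M), ψ a m = a • ψ₀ m - ψ₀ (a • m)) :=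
  stmt16_general ρ d₀ d₁ hex₀ hex₁ τ hτ φ hφ ψ hψ
end

section
/- Suppose ∇ and ∇' are two k-linear g-connections on M (k-linear maps g → End_k(M), not necessarily A-linear in the g variable, satisfying the Leibniz rule in M). Then the map φ : A → Hom_k(g, End_A(M)) defined by φ(a)(D) = a ∇_D − ∇_{a D} takes values in Hom_k(g, End_A(M)) (i.e. a ∇_D − ∇_{a D} is an A-linear endomorphism of M for each a, D), and φ is a derivation from A to the bimodule Hom_k(g, End_A(M)). Moreover φ − φ' (computed from ∇ and ∇') is the inner derivation associated to ∇ − ∇' ∈ Hom_k(g, End_A(M)); hence the class [φ] ∈ HH¹(A, Hom_k(g, End_A(M))) is independent of the choice of k-linear g-connection. -/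
section ConnectionDefect

variable {k A M : Type*} [CommSemiring k] [CommRing A] [Algebra k A]
    [AddCommGroup M] [Module k M] [Module A M] [SMulCommClass k A M]
    {g : Submodule A (Derivation k A A)}

/-- `a ∇_D − ∇_{a D}`: the failure of the connection `∇` to be `A`-linear in `D`. -/
def connectionDefect (N : g → M →ₗ[k] M) (a : A) (D : g) : M →ₗ[k] M :=
  a • N D - N (a • D)

/-- The Leibniz terms `D(b) m` of `∇_D` contribute `a D(b) m` twice, with opposite signs. -/
theorem connectionDefect_map_smul {N : g → M →ₗ[k] M}
    (hleib : ∀ (D : g) (a : A) (m : M),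
      N D (a • m) = a • N D m + (D : Derivation k A A) a • m)
    (a : A) (D : g) (b : A) (m : M) :
    connectionDefect N a D (b • m) = b • connectionDefect N a D m := by
  have hsmulD : ((a • D : g) : Derivation k A A) b = a * (D : Derivation k A A) b := rfl
  simp only [connectionDefect, LinearMap.sub_apply, LinearMap.smul_apply, hleib, hsmulD,
    smul_add, smul_sub, smul_smul, mul_comm b a]
  abel

theorem connectionDefect_mul (N : g → M →ₗ[k] M) (a b : A) (D : g) :
    connectionDefect N (a * b) D = a • connectionDefect N b D + connectionDefect N a (b • D) := by
  simp only [connectionDefect, mul_smul, smul_sub]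
  abel

theorem connectionDefect_sub (N N' : g → M →ₗ[k] M) (a : A) (D : g) :
    connectionDefect N a D - connectionDefect N' a D =
      a • (N D - N' D) - (N (a • D) - N' (a • D)) := by
  simp only [connectionDefect, smul_sub]
  abel

end ConnectionDefect

theorem stmt17_general {k A M : Type*} [Field k] [CommRing A] [Algebra k A]
    [AddCommGroup M] [Module k M] [Module A M] [IsScalarTower k A M]
    (g : Submodule A (Derivation k A A))
    (N N' : g → M →ₗ[k] M)
    -- `N`, `N'` are `k`-linear `g`-connections on `M`:
    (hleibN : ∀ (D : g) (a : A) (m : M),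
      N D (a • m) = a • N D m + (D : Derivation k A A) a • m)
    (Φ Φ' : A → g → M →ₗ[k] M)
    (hΦ : ∀ (a : A) (D : g), Φ a D = a • N D - N (a • D))
    (hΦ' : ∀ (a : A) (D : g), Φ' a D = a • N' D - N' (a • D)) :
    -- `Φ a D` is an `A`-linear endomorphism of `M`:
    (∀ (a : A) (D : g) (b : A) (m : M), Φ a D (b • m) = b • Φ a D m) ∧
    -- `Φ` is a derivation `A → Hom_k(g, End_A(M))`:
    (∀ (a b : A) (D : g), Φ (a * b) D = a • Φ b D + Φ a (b • D)) ∧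
    -- `Φ − Φ'` is the inner derivation associated to `ψ₀ = N − N'`:
    (∀ (a : A) (D : g),
      Φ a D - Φ' a D = a • (N D - N' D) - (N (a • D) - N' (a • D))) := by
  obtain rfl : Φ = connectionDefect N := funext fun a => funext (hΦ a)
  obtain rfl : Φ' = connectionDefect N' := funext fun a => funext (hΦ' a)
  exact ⟨connectionDefect_map_smul hleibN, connectionDefect_mul N, connectionDefect_sub N N'⟩

/-- for two `k`-linear `g`-connections `∇, ∇'` on `M`, the map
`φ(a)(D) = a ∇_D − ∇_{a D}` takes values in `End_A(M)`, is a derivation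
`A → Hom_k(g, End_A(M))`, and `φ − φ'` is the inner derivation of `∇ − ∇'`; hence the
class `[φ] ∈ HH¹(A, Hom_k(g, End_A(M)))` does not depend on the chosen connection. -/
theorem stmt17 {k A M : Type*} [Field k] [CommRing A] [Algebra k A]
    [AddCommGroup M] [Module k M] [Module A M] [IsScalarTower k A M]
    (g : Submodule A (Derivation k A A))
    (N N' : g → M →ₗ[k] M)
    -- `N`, `N'` are `k`-linear `g`-connections on `M`:
    (haddN : ∀ D D', N (D + D') = N D + N D')
    (hkN : ∀ (c : k) (D : g), N (c • D) = c • N D)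
    (hleibN : ∀ (D : g) (a : A) (m : M),
      N D (a • m) = a • N D m + (D : Derivation k A A) a • m)
    (haddN' : ∀ D D', N' (D + D') = N' D + N' D')
    (hkN' : ∀ (c : k) (D : g), N' (c • D) = c • N' D)
    (hleibN' : ∀ (D : g) (a : A) (m : M),
      N' D (a • m) = a • N' D m + (D : Derivation k A A) a • m)
    (Φ Φ' : A → g → M →ₗ[k] M)
    (hΦ : ∀ (a : A) (D : g), Φ a D = a • N D - N (a • D))
    (hΦ' : ∀ (a : A) (D : g), Φ' a D = a • N' D - N' (a • D)) :
    -- `Φ a D` is an `A`-linear endomorphism of `M`: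
    (∀ (a : A) (D : g) (b : A) (m : M), Φ a D (b • m) = b • Φ a D m) ∧
    -- `Φ` is a derivation `A → Hom_k(g, End_A(M))`:
    (∀ (a b : A) (D : g), Φ (a * b) D = a • Φ b D + Φ a (b • D)) ∧
    -- `Φ − Φ'` is the inner derivation associated to `ψ₀ = N − N'`:
    (∀ (a : A) (D : g),
      Φ a D - Φ' a D = a • (N D - N' D) - (N (a • D) - N' (a • D))) :=
  stmt17_general g N N' hleibN Φ Φ' hΦ hΦ'
end
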